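/- Let m ≥ 3 and let λ_1,…,λ_m ∈ ℤ² be such that each λ_i is primitive and det(λ_i,λ_{i+1}) ≠ 0 for i = 1,…,m (indices mod m). Let L = L_1 ∩ ⋯ ∩ L_m and N = ℤ⟨a⟩ + ℤ⟨b⟩. Then φ restricts to a ℤ-module isomorphism from K onto φ(K), and the quotient ℤ-module L/N is isomorphic to K; in particular, L/N is a free ℤ-module of rank m − 2. -/

import Mathlib

/-!
Write `P_n = ∑_{j<n} t_j λ_j`. Then `(φ t)_i = det(P_i, λ_i) = det(P_{i+1}, λ_i)`, so on the
consecutive pair `λ_i, λ_{i+1}` the vector `φ t` is given by the single linear form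
`det(P_{i+1}, ·)`; this is exactly membership in `L_i` (for the pair `λ_m, λ_1` one uses
`P_1 = 0` and `P_{m+1} = ∑ t_j λ_j = 0`, i.e. `t ∈ K`).

Conversely an element `s` of `L` comes with linear forms `f_i` representing it on `λ_i, λ_{i+1}`.
Consecutive forms agree on `λ_{i+1}`, which is primitive, so
`f_i - f_{i+1} = t_{i+1} det(·, λ_{i+1})` for integers `t_j`; telescoping around the cycle gives `t ∈ K`, and `s - φ t` is evaluation of one
fixed form on the `λ_k`, i.e. an element of `N`. If `φ t ∈ N` for `t ∈ K`, the forms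
`det(P_{i+1}, ·)` all coincide with one fixed form (consecutive `λ`'s are independent), which is `0`
as `P_{m+1} = 0`; hence all `P_n` vanish and `t = 0`. Finally `K` is the kernel of `t ↦ ∑ t_i λ_i`,
whose image has rank `2`.
-/

namespace ToricStmt

/-- Cyclic successor on `Fin m` (indices mod `m`). -/
def fsucc {m : ℕ} (i : Fin m) : Fin m := ⟨(i.val + 1) % m, Nat.mod_lt _ i.pos⟩

/-- The submodule `K` of linear relations among the `λ_i = (a_i, b_i)`. -/
def Kmod (m : ℕ) (a b : Fin m → ℤ) : Submodule ℤ (Fin m → ℤ) where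
  carrier := {t | ∑ i, t i * a i = 0 ∧ ∑ i, t i * b i = 0}
  add_mem' := by
    intro x y hx hy
    obtain ⟨hx1, hx2⟩ := hx
    obtain ⟨hy1, hy2⟩ := hy
    constructor
    · simp only [Pi.add_apply, add_mul]
      rw [Finset.sum_add_distrib, hx1, hy1, add_zero]
    · simp only [Pi.add_apply, add_mul]
      rw [Finset.sum_add_distrib, hx2, hy2, add_zero]
  zero_mem' := by constructor <;> simp
  smul_mem' := by
    intro c x hx
    obtain ⟨hx1, hx2⟩ := hx
    constructor
    · simp only [Pi.smul_apply, smul_eq_mul, mul_assoc]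
      rw [← Finset.mul_sum, hx1, mul_zero]
    · simp only [Pi.smul_apply, smul_eq_mul, mul_assoc]
      rw [← Finset.mul_sum, hx2, mul_zero]

/-- The linear map `φ : ℤ^m → ℤ^m`, with `(φ t)_i = ∑_{j<i} (a_j b_i - a_i b_j) t_j`. -/
def phi (m : ℕ) (a b : Fin m → ℤ) : (Fin m → ℤ) →ₗ[ℤ] (Fin m → ℤ) where
  toFun t := fun i => ∑ j ∈ Finset.univ.filter (fun j => j < i), (a j * b i - a i * b j) * t j
  map_add' x y := by
    funext i
    simp only [Pi.add_apply, mul_add]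
    exact Finset.sum_add_distrib
  map_smul' c x := by
    funext i
    simp only [Pi.smul_apply, smul_eq_mul, RingHom.id_apply]
    rw [Finset.mul_sum]
    exact Finset.sum_congr rfl fun j _ => by ring

/-- The lattice `L_i`: the span of the `e_j` for `j ∉ {i, i+1}` together with
`a_i e_i + a_{i+1} e_{i+1}` and `b_i e_i + b_{i+1} e_{i+1}` (indices mod `m`). -/
def Lmod (m : ℕ) (a b : Fin m → ℤ) (i : Fin m) : Submodule ℤ (Fin m → ℤ) :=
  Submodule.span ℤ
    ((fun j : Fin m => (Pi.single j 1 : Fin m → ℤ)) '' {j : Fin m | j ≠ i ∧ j ≠ fsucc i} ∪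
      {a i • (Pi.single i 1 : Fin m → ℤ) + a (fsucc i) • (Pi.single (fsucc i) 1 : Fin m → ℤ),
       b i • (Pi.single i 1 : Fin m → ℤ) + b (fsucc i) • (Pi.single (fsucc i) 1 : Fin m → ℤ)})

open Submodule

section Cyclic

variable {m : ℕ}

lemma fsucc_val_of_lt {i : Fin m} (h : i.val + 1 < m) : (fsucc i).val = i.val + 1 :=
  Nat.mod_eq_of_lt h

lemma fsucc_val_cases (i : Fin m) :
    i.val + 1 < m ∧ (fsucc i).val = i.val + 1 ∨ i.val + 1 = m ∧ (fsucc i).val = 0 := by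
  rcases Nat.lt_or_ge (i.val + 1) m with hi | hi
  · exact .inl ⟨hi, fsucc_val_of_lt hi⟩
  · have hi : i.val + 1 = m := by omega
    exact .inr ⟨hi, by simp [fsucc, hi]⟩

lemma fsucc_ne_self (hm : 2 ≤ m) (i : Fin m) : fsucc i ≠ i := by
  intro h
  have hv := congrArg Fin.val h
  rcases fsucc_val_cases i with ⟨_, _⟩ | ⟨_, _⟩ <;> omega

lemma fsucc_injective : Function.Injective (fsucc : Fin m → Fin m) := by
  intro i j hij
  have hv := congrArg Fin.val hij
  ext
  rcases fsucc_val_cases i with ⟨_, _⟩ | ⟨_, _⟩ <;>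
    rcases fsucc_val_cases j with ⟨_, _⟩ | ⟨_, _⟩ <;> omega

lemma fsucc_bijective : Function.Bijective (fsucc : Fin m → Fin m) :=
  Finite.injective_iff_bijective.mp fsucc_injective

lemma sum_comp_fsucc {M : Type*} [AddCommMonoid M] (f : Fin m → M) :
    ∑ i, f (fsucc i) = ∑ i, f i :=
  fsucc_bijective.sum_comp f

lemma sum_eq_zero_of_apply_fsucc_eq_sub {M : Type*} [AddCommGroup M] {f g : Fin m → M}
    (h : ∀ i, g (fsucc i) = f (fsucc i) - f i) : ∑ i, g i = 0 := by
  rw [← sum_comp_fsucc g]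
  simp only [h, Finset.sum_sub_distrib, sum_comp_fsucc, sub_self]

lemma apply_eq_apply_zero_of_fsucc {β : Type*} {f : Fin m → β}
    (h : ∀ i : Fin m, i.val + 1 < m → f (fsucc i) = f i) (k : Fin m) :
    f k = f ⟨0, k.pos⟩ := by
  obtain ⟨n, hn⟩ := k
  induction n with
  | zero => rfl
  | succ n ih =>
    have hfs : fsucc ⟨n, by omega⟩ = ⟨n + 1, hn⟩ := Fin.ext (fsucc_val_of_lt hn)
    rw [← hfs, h _ hn, ih]

end Cyclic

lemma mem_span_single_image_iff {ι R : Type*} [Fintype ι] [DecidableEq ι] [CommRing R]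
    (J : Set ι) (s : ι → R) :
    s ∈ span R ((fun j => (Pi.single j 1 : ι → R)) '' J) ↔ ∀ j ∉ J, s j = 0 := by
  have := (Pi.basisFun R ι).mem_span_image (m := s) (s := J)
  simp only [Pi.basisFun_apply] at this
  rw [this]
  simp [Set.subset_def, not_imp_comm]

lemma mem_span_single_image_union_pair_iff {ι R : Type*} [Fintype ι] [DecidableEq ι]
    [CommRing R] {i i' : ι} (h : i ≠ i') (u v s : ι → R) :
    s ∈ span R ((fun j => (Pi.single j 1 : ι → R)) '' {j | j ≠ i ∧ j ≠ i'} ∪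
        {u i • Pi.single i 1 + u i' • Pi.single i' 1, v i • Pi.single i 1 + v i' • Pi.single i' 1})
      ↔ ∃ α β : R, s i = α * u i + β * v i ∧ s i' = α * u i' + β * v i' := by
  simp only [span_union, mem_sup, mem_span_pair, mem_span_single_image_iff]
  constructor
  · rintro ⟨y, hy, _, ⟨α, β, rfl⟩, rfl⟩
    refine ⟨α, β, ?_, ?_⟩
    · simp [hy i (by simp), h]
    · simp [hy i' (by simp), h.symm]
  · rintro ⟨α, β, hi, hi'⟩
    refine ⟨_, ?_, _, ⟨α, β, rfl⟩, sub_add_cancel s _⟩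
    intro j hj
    obtain rfl | rfl : j = i ∨ j = i' := by simp only [Set.mem_ofPred_eq] at hj; tauto
    · simp [hi, h]
    · simp [hi', h.symm]

lemma eq_zero_of_det_ne_zero {R : Type*} [CommRing R] [NoZeroDivisors R] {x y p q p' q' : R}
    (hd : p * q' - p' * q ≠ 0) (h : x * p + y * q = 0) (h' : x * p' + y * q' = 0) :
    x = 0 ∧ y = 0 := by
  have hx : x * (p * q' - p' * q) = 0 := by linear_combination q' * h - q * h'
  have hy : y * (p * q' - p' * q) = 0 := by linear_combination p * h' - p' * h
  exact ⟨(mul_eq_zero.mp hx).resolve_right hd, (mul_eq_zero.mp hy).resolve_right hd⟩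

lemma exists_eq_mul_of_mul_add_mul_eq_zero {x y p q : ℤ} (hpq : Int.gcd p q = 1)
    (h : x * p + y * q = 0) : ∃ c, x = c * q ∧ y = -(c * p) := by
  obtain ⟨u, v, huv⟩ := Int.isCoprime_iff_gcd_eq_one.mpr hpq
  exact ⟨x * v - y * u, by linear_combination (-x) * huv + u * h,
    by linear_combination (-y) * huv + v * h⟩

section Toric

variable {m : ℕ} {a b : Fin m → ℤ}

lemma mem_Kmod_iff {t : Fin m → ℤ} :
    t ∈ Kmod m a b ↔ ∑ i, t i * a i = 0 ∧ ∑ i, t i * b i = 0 := Iff.rfl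

lemma mem_Lmod_iff (hm : 2 ≤ m) {i : Fin m} {s : Fin m → ℤ} :
    s ∈ Lmod m a b i ↔ ∃ α β : ℤ,
      s i = α * a i + β * b i ∧ s (fsucc i) = α * a (fsucc i) + β * b (fsucc i) :=
  mem_span_single_image_union_pair_iff (fsucc_ne_self hm i).symm a b s

def prefixSum (x t : Fin m → ℤ) (n : ℕ) : ℤ := ∑ j : Fin m with j.val < n, t j * x j

lemma prefixSum_zero (x t : Fin m → ℤ) : prefixSum x t 0 = 0 := by
  simp [prefixSum]

lemma prefixSum_succ (x t : Fin m → ℤ) (i : Fin m) :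
    prefixSum x t (i + 1) = prefixSum x t i + t i * x i := by
  have : (Finset.univ.filter fun j : Fin m => (j : ℕ) < i + 1) =
      insert i (Finset.univ.filter fun j : Fin m => (j : ℕ) < i) := by
    ext j
    simp only [Finset.mem_filter, Finset.mem_univ, true_and, Finset.mem_insert, Fin.ext_iff]
    omega
  rw [prefixSum, this, Finset.sum_insert (by simp), add_comm, prefixSum]

lemma prefixSum_of_le (x t : Fin m → ℤ) {n : ℕ} (h : m ≤ n) :
    prefixSum x t n = ∑ j, t j * x j := by
  rw [prefixSum, Finset.filter_true_of_mem fun j _ => by omega]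

lemma phi_apply_eq (t : Fin m → ℤ) (i : Fin m) :
    phi m a b t i = b i * prefixSum a t i - a i * prefixSum b t i := by
  simp only [phi, LinearMap.coe_mk, AddHom.coe_mk, prefixSum, Finset.mul_sum,
    ← Finset.sum_sub_distrib, Fin.lt_def]
  exact Finset.sum_congr rfl fun j _ => by ring

lemma phi_apply_eq_succ (t : Fin m → ℤ) (i : Fin m) :
    phi m a b t i = b i * prefixSum a t (i + 1) - a i * prefixSum b t (i + 1) := by
  rw [phi_apply_eq, prefixSum_succ, prefixSum_succ]; ring

lemma phi_apply_fsucc {t : Fin m → ℤ} (ht : t ∈ Kmod m a b) (i : Fin m) :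
    phi m a b t (fsucc i) =
      b (fsucc i) * prefixSum a t (i + 1) - a (fsucc i) * prefixSum b t (i + 1) := by
  rcases fsucc_val_cases i with ⟨-, hv⟩ | ⟨hi, hv⟩
  · rw [phi_apply_eq, hv]
  · rw [phi_apply_eq, hv, prefixSum_zero, prefixSum_zero, prefixSum_of_le _ _ hi.ge,
      prefixSum_of_le _ _ hi.ge, ht.1, ht.2]

lemma phi_mem_iInf_Lmod (hm : 2 ≤ m) {t : Fin m → ℤ} (ht : t ∈ Kmod m a b) :
    phi m a b t ∈ ⨅ i, Lmod m a b i :=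
  mem_iInf _ |>.mpr fun i => (mem_Lmod_iff hm).mpr
    ⟨-prefixSum b t (i + 1), prefixSum a t (i + 1),
      by rw [phi_apply_eq_succ]; ring, by rw [phi_apply_fsucc ht]; ring⟩

lemma prefixSum_succ_eq_of_phi_eq
    (hdet : ∀ i : Fin m, a i * b (fsucc i) - a (fsucc i) * b i ≠ 0)
    {t : Fin m → ℤ} (ht : t ∈ Kmod m a b) {α β : ℤ} (h : phi m a b t = α • a + β • b)
    (i : Fin m) : prefixSum b t (i + 1) = -α ∧ prefixSum a t (i + 1) = β := by
  have hi := congrFun h i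
  have hi' := congrFun h (fsucc i)
  simp only [Pi.add_apply, Pi.smul_apply, smul_eq_mul] at hi hi'
  rw [phi_apply_eq_succ] at hi
  rw [phi_apply_fsucc ht] at hi'
  obtain ⟨hα, hβ⟩ := eq_zero_of_det_ne_zero (x := α + prefixSum b t (i + 1))
    (y := β - prefixSum a t (i + 1)) (hdet i) (by linear_combination -hi)
    (by linear_combination -hi')
  constructor <;> linarith

lemma eq_zero_of_phi_mem_sup (hdet : ∀ i : Fin m, a i * b (fsucc i) - a (fsucc i) * b i ≠ 0)
    {t : Fin m → ℤ} (ht : t ∈ Kmod m a b) (h : phi m a b t ∈ span ℤ {a} ⊔ span ℤ {b}) :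
    t = 0 := by
  obtain ⟨_, hα, _, hβ, hαβ⟩ := mem_sup.mp h
  obtain ⟨α, rfl⟩ := mem_span_singleton.mp hα
  obtain ⟨β, rfl⟩ := mem_span_singleton.mp hβ
  have hP := prefixSum_succ_eq_of_phi_eq hdet ht hαβ.symm
  funext i
  have hm := i.pos
  obtain ⟨hα0, hβ0⟩ : α = 0 ∧ β = 0 := by
    have hlast := hP ⟨m - 1, by omega⟩
    rw [Fin.val_mk, Nat.sub_add_cancel hm, prefixSum_of_le _ _ le_rfl,
      prefixSum_of_le _ _ le_rfl, ht.1, ht.2] at hlast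
    omega
  have hP0 : ∀ n ≤ m, prefixSum a t n = 0 ∧ prefixSum b t n = 0
    | 0, _ => ⟨prefixSum_zero _ _, prefixSum_zero _ _⟩
    | n + 1, hn => by have := hP ⟨n, hn⟩; simp_all
  have ha : t i * a i = 0 := by
    linear_combination -prefixSum_succ a t i + (hP0 _ i.isLt).1 - (hP0 _ i.isLt.le).1
  have hb : t i * b i = 0 := by
    linear_combination -prefixSum_succ b t i + (hP0 _ i.isLt).2 - (hP0 _ i.isLt.le).2
  exact (mul_eq_zero.mp (by linear_combination b (fsucc i) * ha - a (fsucc i) * hb :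
    t i * (a i * b (fsucc i) - a (fsucc i) * b i) = 0)).resolve_right (hdet i)

lemma exists_sub_phi_mem_sup (hm : 2 ≤ m) (hprim : ∀ i, Int.gcd (a i) (b i) = 1)
    {s : Fin m → ℤ} (hs : s ∈ ⨅ i, Lmod m a b i) :
    ∃ t ∈ Kmod m a b, s - phi m a b t ∈ span ℤ {a} ⊔ span ℤ {b} := by
  choose A B hsA hsB using fun i => (mem_Lmod_iff hm).mp (mem_iInf _ |>.mp hs i)
  choose c hcA hcB using fun i => exists_eq_mul_of_mul_add_mul_eq_zero (hprim (fsucc i))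
    (x := A i - A (fsucc i)) (y := B i - B (fsucc i))
    (by linear_combination (hsA (fsucc i)) - hsB i)
  let e := Equiv.ofBijective _ (fsucc_bijective (m := m))
  set t := c ∘ e.symm
  have ht : ∀ i, t (fsucc i) = c i := fun i => congrArg c (e.symm_apply_apply i)
  have htK : t ∈ Kmod m a b :=
    ⟨sum_eq_zero_of_apply_fsucc_eq_sub (f := B) fun i => by rw [ht]; linarith [hcB i],
     sum_eq_zero_of_apply_fsucc_eq_sub (f := -A) fun i => by
       rw [ht, Pi.neg_apply, Pi.neg_apply]; linarith [hcA i]⟩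
  -- `f i` compares the form `(A i, B i)` with the form `det(P_{i+1}, ·)` representing `φ t`
  set f : Fin m → ℤ × ℤ := fun i => (A i + prefixSum b t (i + 1), B i - prefixSum a t (i + 1))
  have hf := apply_eq_apply_zero_of_fsucc (f := f) fun i hi => by
    simp only [f, Prod.mk.injEq]
    rw [prefixSum_succ _ _ (fsucc i), prefixSum_succ _ _ (fsucc i), fsucc_val_of_lt hi, ht]
    exact ⟨by linear_combination -hcA i, by linear_combination -hcB i⟩
  refine ⟨t, htK, mem_sup.mpr ⟨_, smul_mem _ (f ⟨0, by omega⟩).1 (mem_span_singleton_self a),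
    _, smul_mem _ (f ⟨0, by omega⟩).2 (mem_span_singleton_self b), ?_⟩⟩
  funext k
  have hk := hf k
  simp only [f, Prod.ext_iff] at hk
  simp only [Pi.add_apply, Pi.sub_apply, Pi.smul_apply, smul_eq_mul, phi_apply_eq_succ]
  linear_combination -hsA k - a k * hk.1 - b k * hk.2

variable (a b) in
def relMap : (Fin m → ℤ) →ₗ[ℤ] ℤ × ℤ :=
  (Fintype.linearCombination ℤ a).prod (Fintype.linearCombination ℤ b)

lemma Kmod_eq_ker_relMap : Kmod m a b = LinearMap.ker (relMap a b) := by
  ext t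
  simp [mem_Kmod_iff, relMap, Fintype.linearCombination_apply]

lemma finrank_range_relMap (hdet : ∀ i : Fin m, a i * b (fsucc i) - a (fsucc i) * b i ≠ 0)
    (i : Fin m) : Module.finrank ℤ (LinearMap.range (relMap a b)) = 2 := by
  have hli : LinearIndependent ℤ ![(a i, b i), (a (fsucc i), b (fsucc i))] := by
    refine LinearIndependent.pair_iff.mpr fun x y hxy => ?_
    simp only [Prod.ext_iff, Prod.fst_add, Prod.snd_add, Prod.smul_fst, Prod.smul_snd,
      smul_eq_mul, Prod.fst_zero, Prod.snd_zero] at hxy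
    exact eq_zero_of_det_ne_zero (fun h => hdet i (by linear_combination h)) hxy.1 hxy.2
  have hspan : span ℤ (Set.range ![(a i, b i), (a (fsucc i), b (fsucc i))]) ≤
      LinearMap.range (relMap a b) := by
    rw [span_le, Set.range_subset_iff]
    intro j
    fin_cases j
    exacts [⟨Pi.single i 1, by simp [relMap]⟩, ⟨Pi.single (fsucc i) 1, by simp [relMap]⟩]
  refine le_antisymm ?_ ?_
  · simpa using (LinearMap.range (relMap a b)).finrank_le
  · simpa [finrank_span_eq_card hli] using Submodule.finrank_mono hspan

lemma finrank_Kmod (hm : 0 < m)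
    (hdet : ∀ i : Fin m, a i * b (fsucc i) - a (fsucc i) * b i ≠ 0) :
    Module.finrank ℤ (Kmod m a b) = m - 2 := by
  have := (LinearMap.ker (relMap a b)).finrank_quotient_add_finrank
  rw [(relMap a b).quotKerEquivRange.finrank_eq, finrank_range_relMap hdet ⟨0, hm⟩,
    Module.finrank_fin_fun] at this
  rw [Kmod_eq_ker_relMap]
  omega

lemma phi_injOn_Kmod (hdet : ∀ i : Fin m, a i * b (fsucc i) - a (fsucc i) * b i ≠ 0) :
    Set.InjOn (phi m a b) (Kmod m a b) := fun x hx y hy hxy =>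
  sub_eq_zero.mp <| eq_zero_of_phi_mem_sup hdet (sub_mem hx hy)
    (by rw [map_sub, hxy, sub_self]; exact zero_mem _)

lemma bijective_mkQ_comp_restrict_phi (hm : 2 ≤ m) (hprim : ∀ i, Int.gcd (a i) (b i) = 1)
    (hdet : ∀ i : Fin m, a i * b (fsucc i) - a (fsucc i) * b i ≠ 0) :
    Function.Bijective
      ((comap (⨅ i, Lmod m a b i).subtype (span ℤ {a} ⊔ span ℤ {b})).mkQ ∘ₗ
        (phi m a b).restrict fun _ => phi_mem_iInf_Lmod hm) := by
  constructor
  · refine (injective_iff_map_eq_zero _).mpr fun t ht => Subtype.ext ?_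
    rw [LinearMap.comp_apply, mkQ_apply, Quotient.mk_eq_zero, mem_comap] at ht
    exact eq_zero_of_phi_mem_sup hdet t.2 ht
  · intro q
    obtain ⟨⟨s, hs⟩, rfl⟩ := mkQ_surjective _ q
    obtain ⟨t, ht, hst⟩ := exists_sub_phi_mem_sup hm hprim hs
    refine ⟨⟨t, ht⟩, (Submodule.Quotient.eq _).mpr ?_⟩
    rw [mem_comap, ← neg_mem_iff]
    simpa using hst

end Toric

/-- `φ` restricts to a `ℤ`-module isomorphism from `K` onto `φ(K)`,
and `L/N ≅ K` where `L = L_1 ∩ ⋯ ∩ L_m` and `N = ℤ⟨a⟩ + ℤ⟨b⟩`; in particular `L/N`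
is a free `ℤ`-module of rank `m - 2`. -/
theorem stmt14 (m : ℕ) (hm : 3 ≤ m) (a b : Fin m → ℤ)
    (hprim : ∀ i, Int.gcd (a i) (b i) = 1)
    (hdet : ∀ i : Fin m, a i * b (fsucc i) - a (fsucc i) * b i ≠ 0) :
    (∃ e : ↥(Kmod m a b) ≃ₗ[ℤ] ↥((Kmod m a b).map (phi m a b)),
      ∀ t : ↥(Kmod m a b), (e t : Fin m → ℤ) = phi m a b (t : Fin m → ℤ)) ∧
    Nonempty
      ((↥(⨅ i, Lmod m a b i) ⧸
          Submodule.comap (⨅ i, Lmod m a b i).subtype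
            (Submodule.span ℤ {a} ⊔ Submodule.span ℤ {b})) ≃ₗ[ℤ] ↥(Kmod m a b)) ∧
    Module.Free ℤ
      (↥(⨅ i, Lmod m a b i) ⧸
        Submodule.comap (⨅ i, Lmod m a b i).subtype
          (Submodule.span ℤ {a} ⊔ Submodule.span ℤ {b})) ∧
    Module.finrank ℤ
      (↥(⨅ i, Lmod m a b i) ⧸
        Submodule.comap (⨅ i, Lmod m a b i).subtype
          (Submodule.span ℤ {a} ⊔ Submodule.span ℤ {b})) = m - 2 := by
  let e := LinearEquiv.ofBijective _ (bijective_mkQ_comp_restrict_phi (by omega) hprim hdet)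
  refine ⟨⟨.ofBijective _ ⟨LinearMap.submoduleMap_injective_of_injOn (phi_injOn_Kmod hdet),
    LinearMap.submoduleMap_surjective _ _⟩, fun _ => rfl⟩, ⟨e.symm⟩, .of_equiv e, ?_⟩
  rw [← e.finrank_eq, finrank_Kmod (by omega) hdet]

end ToricStmt
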